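/- arXiv:2101.11281 — 6 statements merged into one kernel-verified Lean document; each statement's English description precedes it below -/
import Mathlib

section
/- Let ρ > 0 and 0 < p₁⁰ < 2, and set τ̂₁ = (1/ρ)·log(2/(2−p₁⁰)). Let x₂, p₂ : ℝ → ℝ be differentiable functions satisfying x₂'(t) = 1 − ρ·x₂(t) with x₂(0) = 0, and p₂'(t) = ρ·p₂(t) − p₁⁰ + 1 with p₂(0) = (p₁⁰)²/(4ρ). Then: (i) x₂(t) = (1 − e^{−ρt})/ρ for all t, so x₂(t) > 0 for t > 0; (ii) p₂(t) − x₂(t) = (e^{−ρt}/(4ρ))·(e^{ρt}(2−p₁⁰) − 2)² for every t; consequently p₂(t) − x₂(t) > 0 for all t ∈ [0, τ̂₁) and p₂(τ̂₁) − x₂(τ̂₁) = 0; (iii) p₂(t) + x₂(t) > 0 for all t ∈ [0, τ̂₁]; (iv) p₂(τ̂₁) = x₂(τ̂₁) = p₁⁰/(2ρ), so that p₁⁰ = ρ·(p₂(τ̂₁) + x₂(τ̂₁)). -/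
open Real

/-!
Both equations are linear with constant coefficients, so their solutions are explicit. With
these formulas `p₂ - x₂` is a positive multiple of the square of `e^{ρt}(2 - p₁⁰) - 2`, which
is negative for `t < τ̂₁` and vanishes at `τ̂₁`, where `e^{ρτ̂₁} = 2 / (2 - p₁⁰)`.
-/

theorem eq_exp_of_hasDerivAt_linear {a b : ℝ} {f : ℝ → ℝ} (ha : a ≠ 0)
    (hf : ∀ t, HasDerivAt f (a * f t + b) t) (t : ℝ) :
    f t = (f 0 + b / a) * exp (a * t) - b / a := by
  have hg : ∀ s, HasDerivAt (fun s => exp (-(a * s)) * (f s + b / a)) 0 s := by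
    intro s
    have he : HasDerivAt (fun s => exp (-(a * s))) (-a * exp (-(a * s))) s := by
      simpa [mul_comm] using ((hasDerivAt_id s).const_mul a).neg.exp
    refine (he.mul ((hf s).add_const (b / a))).congr_deriv ?_
    field_simp
    ring
  have hconst := is_const_of_deriv_eq_zero (fun s => (hg s).differentiableAt)
    (fun s => (hg s).deriv) t 0
  simp only [mul_zero, neg_zero, exp_zero, one_mul] at hconst
  rw [← hconst, mul_right_comm, ← exp_add, neg_add_cancel, exp_zero, one_mul,
    add_sub_cancel_right]

theorem one_sub_exp_neg_mul_div_pos {ρ t : ℝ} (hρ : 0 < ρ) (ht : 0 < t) :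
    0 < (1 - exp (-ρ * t)) / ρ :=
  div_pos (sub_pos.2 (exp_lt_one_iff.2 (by nlinarith))) hρ

theorem one_sub_exp_neg_mul_div_nonneg {ρ t : ℝ} (hρ : 0 ≤ ρ) (ht : 0 ≤ t) :
    0 ≤ (1 - exp (-ρ * t)) / ρ :=
  div_nonneg (sub_nonneg.2 (exp_le_one_iff.2 (by nlinarith))) hρ

theorem stmt1 (ρ p₁0 : ℝ) (hρ : 0 < ρ) (hp₁0 : 0 < p₁0) (hp₁0' : p₁0 < 2)
    (τ₁ : ℝ) (hτ₁ : τ₁ = (1 / ρ) * Real.log (2 / (2 - p₁0)))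
    (x₂ p₂ : ℝ → ℝ)
    (hx : ∀ t : ℝ, HasDerivAt x₂ (1 - ρ * x₂ t) t) (hx0 : x₂ 0 = 0)
    (hp : ∀ t : ℝ, HasDerivAt p₂ (ρ * p₂ t - p₁0 + 1) t)
    (hp0 : p₂ 0 = p₁0 ^ 2 / (4 * ρ)) :
    -- (i)
    (∀ t : ℝ, x₂ t = (1 - Real.exp (-ρ * t)) / ρ) ∧
    (∀ t : ℝ, 0 < t → 0 < x₂ t) ∧
    -- (ii)
    (∀ t : ℝ, p₂ t - x₂ t =
      (Real.exp (-ρ * t) / (4 * ρ)) * (Real.exp (ρ * t) * (2 - p₁0) - 2) ^ 2) ∧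
    (∀ t ∈ Set.Ico (0 : ℝ) τ₁, 0 < p₂ t - x₂ t) ∧
    (p₂ τ₁ - x₂ τ₁ = 0) ∧
    -- (iii)
    (∀ t ∈ Set.Icc (0 : ℝ) τ₁, 0 < p₂ t + x₂ t) ∧
    -- (iv)
    (p₂ τ₁ = p₁0 / (2 * ρ)) ∧ (x₂ τ₁ = p₁0 / (2 * ρ)) ∧
    (p₁0 = ρ * (p₂ τ₁ + x₂ τ₁)) := by
  have hq : 0 < 2 - p₁0 := by linarith
  have hx₂ (t : ℝ) : x₂ t = (1 - exp (-ρ * t)) / ρ := by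
    rw [eq_exp_of_hasDerivAt_linear (b := 1) (neg_ne_zero.2 hρ.ne')
      (fun s => (hx s).congr_deriv (by ring)) t, hx0]
    field_simp
    ring
  have hp₂ (t : ℝ) :
      p₂ t = (p₁0 ^ 2 / (4 * ρ) + (1 - p₁0) / ρ) * exp (ρ * t) - (1 - p₁0) / ρ := by
    rw [eq_exp_of_hasDerivAt_linear (b := 1 - p₁0) hρ.ne'
      (fun s => (hp s).congr_deriv (by ring)) t, hp0]
  have hdiff (t : ℝ) : p₂ t - x₂ t =
      exp (-ρ * t) / (4 * ρ) * (exp (ρ * t) * (2 - p₁0) - 2) ^ 2 := by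
    rw [hp₂, hx₂, neg_mul, exp_neg]
    field_simp
    ring
  have hEτ : exp (ρ * τ₁) = 2 / (2 - p₁0) := by
    rw [hτ₁, ← mul_assoc, mul_one_div_cancel hρ.ne', one_mul, exp_log (by positivity)]
  have hdτ : p₂ τ₁ - x₂ τ₁ = 0 := by
    rw [hdiff, hEτ, div_mul_cancel₀ _ hq.ne', sub_self]
    simp
  have hxτ : x₂ τ₁ = p₁0 / (2 * ρ) := by
    rw [hx₂, neg_mul, exp_neg, hEτ]
    field_simp
    ring
  have hdpos : ∀ t ∈ Set.Ico (0 : ℝ) τ₁, 0 < p₂ t - x₂ t := by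
    rintro t ⟨-, htτ⟩
    have hlt : exp (ρ * t) * (2 - p₁0) < 2 := by
      rw [← lt_div_iff₀ hq, ← hEτ]
      exact exp_lt_exp.2 (mul_lt_mul_of_pos_left htτ hρ)
    rw [hdiff]
    have : exp (ρ * t) * (2 - p₁0) - 2 ≠ 0 := by linarith
    positivity
  refine ⟨hx₂, fun t ht => hx₂ t ▸ one_sub_exp_neg_mul_div_pos hρ ht, hdiff, hdpos, hdτ,
    ?_, by linarith, hxτ, ?_⟩
  · rintro t ⟨ht0, htτ⟩
    rcases htτ.lt_or_eq with htτ | rfl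
    · linarith [hdpos t ⟨ht0, htτ⟩, hx₂ t ▸ one_sub_exp_neg_mul_div_nonneg hρ.le ht0]
    · have : 0 < p₁0 / (2 * ρ) := by positivity
      linarith
  · rw [show p₂ τ₁ = x₂ τ₁ by linarith, hxτ]
    field_simp
    ring
end

section
/- Let ρ > 0, p₁⁰ > 0, τ̂₂ ∈ ℝ, and set τ̂₃ = τ̂₂ + (1/ρ)·log(1+√2). Let x₂, p₂ : ℝ → ℝ be differentiable functions satisfying x₂'(t) = −ρ·x₂(t) and p₂'(t) = ρ·p₂(t) − p₁⁰, with x₂(τ̂₂) = p₂(τ̂₂) = p₁⁰/(2ρ). Then for every t: p₂(t) + x₂(t) = (p₁⁰/(2ρ))·(−e^{ρ(t−τ̂₂)} + 2 + e^{−ρ(t−τ̂₂)}) and p₂(t) − x₂(t) = (p₁⁰/(2ρ))·(−e^{ρ(t−τ̂₂)} + 2 − e^{−ρ(t−τ̂₂)}). Consequently: x₂(t) > 0 for all t; p₂(t) − x₂(t) < 0 < p₂(t) + x₂(t) for all t ∈ (τ̂₂, τ̂₃); and p₂(τ̂₃) + x₂(τ̂₃) = 0. -/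
/-!
Both equations are linear with constant coefficients, so `x₂ = c e^{-s}` and `p₂ = 2c - c e^{s}`
with `c = p₁⁰/(2ρ)` and `s = ρ(t - τ̂₂)`. Hence `p₂ + x₂ = 2c(1 - sinh s)` and
`p₂ - x₂ = 2c(1 - cosh s)`: the first is positive for `s < arsinh 1 = log(1 + √2)` and
vanishes there, the second is negative for every `s ≠ 0`.
-/

open Real

theorem eq_mul_exp_of_hasDerivAt {f : ℝ → ℝ} {a : ℝ} (hf : ∀ t, HasDerivAt f (a * f t) t)
    (t₀ t : ℝ) : f t = f t₀ * exp (a * (t - t₀)) := by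
  have hg : ∀ s, HasDerivAt (fun u => f u * exp (-a * u)) 0 s := fun s => by
    have hexp : HasDerivAt (fun u => -a * u) (-a) s := by
      simpa using (hasDerivAt_id s).const_mul (-a)
    exact ((hf s).mul hexp.exp).congr_deriv (by ring)
  have hconst := is_const_of_deriv_eq_zero (fun s => (hg s).differentiableAt)
    (fun s => (hg s).deriv) t t₀
  calc f t = f t * exp (-a * t) * exp (a * t) := by rw [mul_assoc, ← exp_add]; simp
    _ = f t₀ * exp (a * (t - t₀)) := by rw [hconst, mul_assoc, ← exp_add]; ring_nf

theorem eq_of_hasDerivAt_mul_add {f : ℝ → ℝ} {a b : ℝ} (ha : a ≠ 0)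
    (hf : ∀ t, HasDerivAt f (a * f t + b) t) (t₀ t : ℝ) :
    f t = (f t₀ + b / a) * exp (a * (t - t₀)) - b / a := by
  have hg : ∀ t, HasDerivAt (fun u => f u + b / a) (a * (f t + b / a)) t := fun t =>
    ((hf t).add_const (b / a)).congr_deriv (by rw [mul_add, mul_div_cancel₀ _ ha])
  rw [← eq_mul_exp_of_hasDerivAt hg t₀ t]
  ring

theorem arsinh_one : arsinh 1 = log (1 + √2) := by
  norm_num [arsinh]

theorem neg_exp_add_two_add_exp_neg (s : ℝ) : -exp s + 2 + exp (-s) = 2 * (1 - sinh s) := by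
  rw [sinh_eq]; ring

theorem neg_exp_add_two_sub_exp_neg (s : ℝ) : -exp s + 2 - exp (-s) = 2 * (1 - cosh s) := by
  rw [cosh_eq]; ring

theorem stmt2 (ρ p₁0 τ₂ : ℝ) (hρ : 0 < ρ) (hp₁0 : 0 < p₁0)
    (τ₃ : ℝ) (hτ₃ : τ₃ = τ₂ + (1 / ρ) * Real.log (1 + Real.sqrt 2))
    (x₂ p₂ : ℝ → ℝ)
    (hx : ∀ t : ℝ, HasDerivAt x₂ (-ρ * x₂ t) t)
    (hp : ∀ t : ℝ, HasDerivAt p₂ (ρ * p₂ t - p₁0) t)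
    (hx2 : x₂ τ₂ = p₁0 / (2 * ρ)) (hp2 : p₂ τ₂ = p₁0 / (2 * ρ)) :
    (∀ t : ℝ, p₂ t + x₂ t =
      (p₁0 / (2 * ρ)) * (-Real.exp (ρ * (t - τ₂)) + 2 + Real.exp (-ρ * (t - τ₂)))) ∧
    (∀ t : ℝ, p₂ t - x₂ t =
      (p₁0 / (2 * ρ)) * (-Real.exp (ρ * (t - τ₂)) + 2 - Real.exp (-ρ * (t - τ₂)))) ∧
    (∀ t : ℝ, 0 < x₂ t) ∧
    (∀ t ∈ Set.Ioo τ₂ τ₃, p₂ t - x₂ t < 0 ∧ 0 < p₂ t + x₂ t) ∧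
    (p₂ τ₃ + x₂ τ₃ = 0) := by
  set c := p₁0 / (2 * ρ)
  have hc : 0 < c := by positivity
  have hx' (t : ℝ) : x₂ t = c * exp (-ρ * (t - τ₂)) := by
    rw [eq_mul_exp_of_hasDerivAt hx τ₂ t, hx2]
  have hp' (t : ℝ) : p₂ t = 2 * c - c * exp (ρ * (t - τ₂)) := by
    rw [eq_of_hasDerivAt_mul_add hρ.ne' (fun t => (hp t).congr_deriv (sub_eq_add_neg _ _)) τ₂ t,
      hp2]
    have hp₁0c : p₁0 / ρ = 2 * c := by simp only [c]; field_simp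
    rw [neg_div, hp₁0c]
    ring
  have hsum (t : ℝ) : p₂ t + x₂ t = c * (-exp (ρ * (t - τ₂)) + 2 + exp (-ρ * (t - τ₂))) := by
    rw [hx', hp']; ring
  have hdiff (t : ℝ) : p₂ t - x₂ t = c * (-exp (ρ * (t - τ₂)) + 2 - exp (-ρ * (t - τ₂))) := by
    rw [hx', hp']; ring
  have hτ₃' : ρ * (τ₃ - τ₂) = arsinh 1 := by
    rw [hτ₃, arsinh_one]; field_simp; ring
  refine ⟨hsum, hdiff, fun t => by rw [hx']; positivity, ?_, ?_⟩
  · rintro t ⟨h₂, h₃⟩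
    have hs₀ : 0 < ρ * (t - τ₂) := mul_pos hρ (sub_pos.mpr h₂)
    have hs₁ : ρ * (t - τ₂) < arsinh 1 := hτ₃' ▸ mul_lt_mul_of_pos_left (by linarith) hρ
    rw [hdiff, hsum, neg_mul, neg_exp_add_two_sub_exp_neg, neg_exp_add_two_add_exp_neg]
    have hcosh : 1 < cosh (ρ * (t - τ₂)) := one_lt_cosh.mpr hs₀.ne'
    have hsinh : sinh (ρ * (t - τ₂)) < 1 := sinh_arsinh 1 ▸ sinh_lt_sinh.mpr hs₁
    exact ⟨mul_neg_of_pos_of_neg hc (by linarith), mul_pos hc (by linarith)⟩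
  · rw [hsum, neg_mul, neg_exp_add_two_add_exp_neg, hτ₃', sinh_arsinh]
    ring
end

section
/- Let ρ > 0 and 0 < p₁⁰ < 2, let τ̂₃ ∈ ℝ, and set T = τ̂₃ + (1/ρ)·log(1 + (√2−1)·p₁⁰/2). Let x₂, p₂ : ℝ → ℝ be differentiable functions satisfying x₂'(t) = −1 − ρ·x₂(t) and p₂'(t) = ρ·p₂(t) − p₁⁰ + 1, with x₂(τ̂₃) = (√2−1)·p₁⁰/(2ρ) and p₂(τ̂₃) = −x₂(τ̂₃). Then: (i) x₂(t) > 0 for t ∈ [τ̂₃, T) and x₂(T) = 0; (ii) p₂(τ̂₃) + x₂(τ̂₃) = 0 and p₂(t) + x₂(t) < 0 for every t ∈ (τ̂₃, T]. -/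
/-!
Both equations are linear, so on the arc `x₂` and `p₂` are explicit affine functions of
`E = exp (ρ (t - τ̂₃))`: `ρ x₂ + 1 = k / E` with `k = 1 + (√2 - 1) p₁⁰ / 2`, so `x₂ > 0` while
`E < k` and `x₂ = 0` at `E = k`, i.e. at `t = T`. Multiplying `p₂ + x₂` by `ρ E` gives a quadratic in `E` that vanishes
at `E = 1` (the switching condition at `τ̂₃`) and whose other factor is negative for `E ≤ k`.
-/

open Real

theorem eq_mul_exp_of_hasDerivAt_mul {z : ℝ → ℝ} {a : ℝ} (hz : ∀ t, HasDerivAt z (a * z t) t)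
    (t₀ t : ℝ) : z t = z t₀ * exp (a * (t - t₀)) := by
  have hderiv : ∀ s, HasDerivAt (fun s => z s * exp (-a * (s - t₀))) 0 s := by
    intro s
    have hlin : HasDerivAt (fun s => -a * (s - t₀)) (-a) s := by
      simpa using ((hasDerivAt_id s).sub_const t₀).const_mul (-a)
    exact ((hz s).mul hlin.exp).congr_deriv (by ring)
  have hconst := is_const_of_deriv_eq_zero (fun s => (hderiv s).differentiableAt)
    (fun s => (hderiv s).deriv) t t₀
  simp only [sub_self, mul_zero, exp_zero, mul_one] at hconst
  rw [← hconst, mul_assoc, ← exp_add, neg_mul, neg_add_cancel, exp_zero, mul_one]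

namespace LastBangArc

variable {ρ τ : ℝ} {x p : ℝ → ℝ}

theorem state_mul_exp_eq (hx : ∀ t, HasDerivAt x (-1 - ρ * x t) t) (t : ℝ) :
    (ρ * x t + 1) * exp (ρ * (t - τ)) = ρ * x τ + 1 := by
  have h := eq_mul_exp_of_hasDerivAt_mul (z := fun t => ρ * x t + 1) (a := -ρ)
    (fun t => (((hx t).const_mul ρ).add_const 1).congr_deriv (by ring)) τ t
  rw [h, mul_assoc, ← exp_add, neg_mul, neg_add_cancel, exp_zero, mul_one]

theorem state_pos_iff (hρ : 0 < ρ) (hx : ∀ t, HasDerivAt x (-1 - ρ * x t) t) (t : ℝ) :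
    0 < x t ↔ exp (ρ * (t - τ)) < ρ * x τ + 1 := by
  rw [← state_mul_exp_eq hx t, lt_mul_iff_one_lt_left (exp_pos _)]
  constructor <;> intro h <;> nlinarith

theorem state_eq_zero_iff (hρ : 0 < ρ) (hx : ∀ t, HasDerivAt x (-1 - ρ * x t) t) (t : ℝ) :
    x t = 0 ↔ exp (ρ * (t - τ)) = ρ * x τ + 1 := by
  rw [← state_mul_exp_eq hx t]
  constructor <;> intro h
  · simp [h]
  · have : ρ * x t * exp (ρ * (t - τ)) = 0 := by linarith
    simpa [hρ.ne', (exp_pos _).ne'] using this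

theorem costate_add_state_neg {c : ℝ} (hρ : 0 < ρ) (hc : 0 < c)
    (hx : ∀ t, HasDerivAt x (-1 - ρ * x t) t) (hp : ∀ t, HasDerivAt p (ρ * p t - c + 1) t)
    (hpx : p τ + x τ = 0) {t : ℝ} (h1 : 1 < exp (ρ * (t - τ)))
    (hk : exp (ρ * (t - τ)) ≤ ρ * x τ + 1) : p t + x t < 0 := by
  set E := exp (ρ * (t - τ))
  set k := ρ * x τ + 1
  have hxE := state_mul_exp_eq (τ := τ) hx t
  have hpE := eq_mul_exp_of_hasDerivAt_mul (z := fun t => ρ * p t + 1 - c) (a := ρ)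
    (fun t => ((((hp t).const_mul ρ).add_const 1).sub_const c).congr_deriv (by ring)) τ t
  have key : ρ * E * (p t + x t) = (E - 1) * ((1 - c - k) * E + (E - k)) := by
    linear_combination E * hpE + hxE + ρ * E ^ 2 * hpx
  have hfactor : (1 - c - k) * E + (E - k) < 0 := by nlinarith
  nlinarith [mul_pos hρ (zero_lt_one.trans h1)]

end LastBangArc

open LastBangArc

theorem stmt3_general (ρ p₁0 τ₃ : ℝ) (hρ : 0 < ρ) (hp₁0 : 0 < p₁0)
    (T : ℝ) (hT : T = τ₃ + (1 / ρ) * Real.log (1 + (Real.sqrt 2 - 1) * p₁0 / 2))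
    (x₂ p₂ : ℝ → ℝ)
    (hx : ∀ t : ℝ, HasDerivAt x₂ (-1 - ρ * x₂ t) t)
    (hp : ∀ t : ℝ, HasDerivAt p₂ (ρ * p₂ t - p₁0 + 1) t)
    (hx3 : x₂ τ₃ = (Real.sqrt 2 - 1) * p₁0 / (2 * ρ))
    (hp3 : p₂ τ₃ = -x₂ τ₃) :
    -- (i)
    (∀ t ∈ Set.Ico τ₃ T, 0 < x₂ t) ∧ (x₂ T = 0) ∧
    -- (ii)
    (p₂ τ₃ + x₂ τ₃ = 0) ∧ (∀ t ∈ Set.Ioc τ₃ T, p₂ t + x₂ t < 0) := by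
  have hk : ρ * x₂ τ₃ + 1 = 1 + (√2 - 1) * p₁0 / 2 := by
    rw [hx3]; field_simp; ring
  have hk1 : 1 < ρ * x₂ τ₃ + 1 := by
    have : 1 < √2 := by rw [lt_sqrt zero_le_one]; norm_num
    rw [hk]; nlinarith
  have hexpT : exp (ρ * (T - τ₃)) = ρ * x₂ τ₃ + 1 := by
    rw [hT, add_sub_cancel_left, ← mul_assoc, mul_one_div_cancel hρ.ne', one_mul, hk,
      exp_log (by linarith)]
  have hpx : p₂ τ₃ + x₂ τ₃ = 0 := by rw [hp3, neg_add_cancel]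
  refine ⟨fun t ht => ?_, (state_eq_zero_iff hρ hx T).2 hexpT, hpx, fun t ht => ?_⟩
  · rw [state_pos_iff hρ hx, ← hexpT, exp_lt_exp]
    nlinarith [ht.2]
  · refine costate_add_state_neg hρ hp₁0 hx hp hpx ?_ ?_
    · exact one_lt_exp_iff.2 (mul_pos hρ (sub_pos.2 ht.1))
    · rw [← hexpT, exp_le_exp]
      nlinarith [ht.2]

theorem stmt3 (ρ p₁0 τ₃ : ℝ) (hρ : 0 < ρ) (hp₁0 : 0 < p₁0) (hp₁0' : p₁0 < 2)
    (T : ℝ) (hT : T = τ₃ + (1 / ρ) * Real.log (1 + (Real.sqrt 2 - 1) * p₁0 / 2))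
    (x₂ p₂ : ℝ → ℝ)
    (hx : ∀ t : ℝ, HasDerivAt x₂ (-1 - ρ * x₂ t) t)
    (hp : ∀ t : ℝ, HasDerivAt p₂ (ρ * p₂ t - p₁0 + 1) t)
    (hx3 : x₂ τ₃ = (Real.sqrt 2 - 1) * p₁0 / (2 * ρ))
    (hp3 : p₂ τ₃ = -x₂ τ₃) :
    -- (i)
    (∀ t ∈ Set.Ico τ₃ T, 0 < x₂ t) ∧ (x₂ T = 0) ∧
    -- (ii)
    (p₂ τ₃ + x₂ τ₃ = 0) ∧ (∀ t ∈ Set.Ioc τ₃ T, p₂ t + x₂ t < 0) :=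
  stmt3_general ρ p₁0 τ₃ hρ hp₁0 T hT x₂ p₂ hx hp hx3 hp3
end

section
/- Let ρ > 0 and τ̂₁ < τ̂₂ be real numbers. Suppose z₁, z₂, p₁, p₂ : ℝ → ℝ are differentiable and, setting φ(t) = (ρp₂(t) − p₁(t))·e^{ρ(t−τ̂₁)} + ρz₂(t)·e^{−ρ(t−τ̂₁)}, satisfy for all t: p₁'(t) = 0, z₁'(t) = −(φ(t)/(2ρ))·e^{ρ(t−τ̂₁)}, z₂'(t) = (φ(t)/2)·e^{ρ(t−τ̂₁)}, p₂'(t) = −(φ(t)/2)·e^{−ρ(t−τ̂₁)}. Then: (a) the function t ↦ z₂(t)·e^{−ρ(t−τ̂₁)} is affine, i.e., there exist constants a, b with z₂(t) = (a + b(t−τ̂₁))·e^{ρ(t−τ̂₁)} for all t; (b) if moreover z₁(τ̂₁) = z₂(τ̂₁) = 0 and z₁(τ̂₂) = z₂(τ̂₂) = 0, then z₁ ≡ 0, z₂ ≡ 0 and φ ≡ 0 on ℝ. -/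
/-!
Write `E(t) = e^{ρ(t-τ₁)}`. Along the system, `ψ = ((ρp₂ - p₁)E - ρz₂/E)/2` (`firstIntegral`)
is constant, its derivative being `-ρφ/4 + ρφ/4`, while `(z₂/E)' = ψ`. Hence `z₂/E` is affine;
vanishing at `τ₁ ≠ τ₂` forces it to vanish identically, and then `z₂' = φE/2 = 0` gives
`φ ≡ 0`, so `z₁` is constant, hence zero.
-/

open Real

lemma hasDerivAt_exp_mul_sub (c τ t : ℝ) :
    HasDerivAt (fun s => exp (c * (s - τ))) (c * exp (c * (t - τ))) t := by
  simpa [mul_comm] using (((hasDerivAt_id t).sub_const τ).const_mul c).exp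

lemma exp_mul_mul_exp_neg_mul (c x : ℝ) : exp (c * x) * exp (-c * x) = 1 := by
  rw [← exp_add, neg_mul, add_neg_cancel, exp_zero]

section ConstantDerivative

variable {𝕜 : Type*} [RCLike 𝕜]

lemma is_const_of_hasDerivAt_zero {G : Type*} [NormedAddCommGroup G] [NormedSpace 𝕜 G]
    {f : 𝕜 → G} (hf : ∀ x, HasDerivAt f 0 x) (x y : 𝕜) : f x = f y :=
  is_const_of_deriv_eq_zero (fun x => (hf x).differentiableAt) (fun x => (hf x).deriv) x y

lemma eq_add_mul_sub_of_hasDerivAt_const {g : 𝕜 → 𝕜} {b : 𝕜} (hg : ∀ x, HasDerivAt g b x)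
    (x y : 𝕜) : g x = g y + b * (x - y) := by
  have hconst : ∀ x, HasDerivAt (fun s => g s - b * s) 0 x := fun x =>
    ((hg x).fun_sub ((hasDerivAt_id x).const_mul b)).congr_deriv (by ring)
  linear_combination is_const_of_hasDerivAt_zero hconst x y

end ConstantDerivative

namespace AccessorySystem

noncomputable def firstIntegral (ρ τ₁ : ℝ) (z₂ p₁ p₂ : ℝ → ℝ) (t : ℝ) : ℝ :=
  ((ρ * p₂ t - p₁ t) * exp (ρ * (t - τ₁)) - ρ * (z₂ t * exp (-ρ * (t - τ₁)))) / 2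

variable {ρ τ₁ : ℝ} {z₂ p₁ p₂ φ : ℝ → ℝ}

lemma hasDerivAt_z₂_mul_exp_neg (hφ : ∀ t, φ t =
      (ρ * p₂ t - p₁ t) * exp (ρ * (t - τ₁)) + ρ * z₂ t * exp (-ρ * (t - τ₁)))
    (hz₂ : ∀ t, HasDerivAt z₂ ((φ t / 2) * exp (ρ * (t - τ₁))) t) (t : ℝ) :
    HasDerivAt (fun s => z₂ s * exp (-ρ * (s - τ₁))) (firstIntegral ρ τ₁ z₂ p₁ p₂ t) t := by
  refine ((hz₂ t).fun_mul (hasDerivAt_exp_mul_sub (-ρ) τ₁ t)).congr_deriv ?_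
  unfold firstIntegral
  linear_combination hφ t / 2 + φ t / 2 * exp_mul_mul_exp_neg_mul ρ (t - τ₁)

lemma hasDerivAt_firstIntegral (hφ : ∀ t, φ t =
      (ρ * p₂ t - p₁ t) * exp (ρ * (t - τ₁)) + ρ * z₂ t * exp (-ρ * (t - τ₁)))
    (hp₁ : ∀ t, HasDerivAt p₁ 0 t)
    (hz₂ : ∀ t, HasDerivAt z₂ ((φ t / 2) * exp (ρ * (t - τ₁))) t)
    (hp₂ : ∀ t, HasDerivAt p₂ (-(φ t / 2) * exp (-ρ * (t - τ₁))) t) (t : ℝ) :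
    HasDerivAt (firstIntegral ρ τ₁ z₂ p₁ p₂) 0 t := by
  have hq := (((hp₂ t).const_mul ρ).fun_sub (hp₁ t)).fun_mul (hasDerivAt_exp_mul_sub ρ τ₁ t)
  have hg := (hasDerivAt_z₂_mul_exp_neg hφ hz₂ t).const_mul ρ
  refine ((hq.fun_sub hg).div_const 2).congr_deriv ?_
  unfold firstIntegral
  linear_combination (-ρ / 4) * hφ t - (ρ * φ t / 4) * exp_mul_mul_exp_neg_mul ρ (t - τ₁)

lemma exists_z₂_eq_affine_mul_exp (hφ : ∀ t, φ t =
      (ρ * p₂ t - p₁ t) * exp (ρ * (t - τ₁)) + ρ * z₂ t * exp (-ρ * (t - τ₁)))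
    (hp₁ : ∀ t, HasDerivAt p₁ 0 t)
    (hz₂ : ∀ t, HasDerivAt z₂ ((φ t / 2) * exp (ρ * (t - τ₁))) t)
    (hp₂ : ∀ t, HasDerivAt p₂ (-(φ t / 2) * exp (-ρ * (t - τ₁))) t) :
    ∃ b, ∀ t, z₂ t = (z₂ τ₁ + b * (t - τ₁)) * exp (ρ * (t - τ₁)) := by
  have hg (s : ℝ) : HasDerivAt (fun s => z₂ s * exp (-ρ * (s - τ₁)))
      (firstIntegral ρ τ₁ z₂ p₁ p₂ τ₁) s := by
    rw [← is_const_of_hasDerivAt_zero (hasDerivAt_firstIntegral hφ hp₁ hz₂ hp₂) s τ₁]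
    exact hasDerivAt_z₂_mul_exp_neg hφ hz₂ s
  refine ⟨firstIntegral ρ τ₁ z₂ p₁ p₂ τ₁, fun t => ?_⟩
  have haffine := eq_add_mul_sub_of_hasDerivAt_const hg t τ₁
  simp only [sub_self, mul_zero, exp_zero, mul_one] at haffine
  linear_combination exp (ρ * (t - τ₁)) * haffine - z₂ t * exp_mul_mul_exp_neg_mul ρ (t - τ₁)

end AccessorySystem

open AccessorySystem in
theorem stmt7_general (ρ τ₁ τ₂ : ℝ) (hτ : τ₁ < τ₂)
    (z₁ z₂ p₁ p₂ : ℝ → ℝ)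
    (φ : ℝ → ℝ)
    (hφ : ∀ t : ℝ, φ t =
      (ρ * p₂ t - p₁ t) * Real.exp (ρ * (t - τ₁)) + ρ * z₂ t * Real.exp (-ρ * (t - τ₁)))
    (hp₁ : ∀ t : ℝ, HasDerivAt p₁ 0 t)
    (hz₁ : ∀ t : ℝ, HasDerivAt z₁ (-(φ t / (2 * ρ)) * Real.exp (ρ * (t - τ₁))) t)
    (hz₂ : ∀ t : ℝ, HasDerivAt z₂ ((φ t / 2) * Real.exp (ρ * (t - τ₁))) t)
    (hp₂ : ∀ t : ℝ, HasDerivAt p₂ (-(φ t / 2) * Real.exp (-ρ * (t - τ₁))) t) :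
    -- (a)
    (∃ a b : ℝ, ∀ t : ℝ, z₂ t = (a + b * (t - τ₁)) * Real.exp (ρ * (t - τ₁))) ∧
    -- (b)
    (z₁ τ₁ = 0 → z₂ τ₁ = 0 → z₁ τ₂ = 0 → z₂ τ₂ = 0 →
      ∀ t : ℝ, z₁ t = 0 ∧ z₂ t = 0 ∧ φ t = 0) := by
  obtain ⟨b, hz₂_eq⟩ := exists_z₂_eq_affine_mul_exp hφ hp₁ hz₂ hp₂
  refine ⟨⟨z₂ τ₁, b, hz₂_eq⟩, fun hz₁τ₁ hz₂τ₁ _ hz₂τ₂ => ?_⟩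
  have hb : b = 0 := by
    have h := hz₂_eq τ₂
    rw [hz₂τ₂, hz₂τ₁, zero_add, eq_comm, mul_eq_zero, mul_eq_zero] at h
    exact (h.resolve_right (exp_pos _).ne').resolve_right (sub_ne_zero.2 hτ.ne')
  have hz₂_zero : z₂ = 0 := funext fun t => by simp [hz₂_eq t, hz₂τ₁, hb]
  have hφ_zero (t : ℝ) : φ t = 0 := by
    have hz₂' : HasDerivAt z₂ 0 t := by
      rw [hz₂_zero]
      exact hasDerivAt_const t (0 : ℝ)
    simpa [(exp_pos _).ne'] using (hz₂ t).unique hz₂'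
  have hz₁' (t : ℝ) : HasDerivAt z₁ 0 t := by simpa [hφ_zero t] using hz₁ t
  exact fun t => ⟨by rw [is_const_of_hasDerivAt_zero hz₁' t τ₁, hz₁τ₁],
    congrFun hz₂_zero t, hφ_zero t⟩

theorem stmt7 (ρ τ₁ τ₂ : ℝ) (hρ : 0 < ρ) (hτ : τ₁ < τ₂)
    (z₁ z₂ p₁ p₂ : ℝ → ℝ)
    (φ : ℝ → ℝ)
    (hφ : ∀ t : ℝ, φ t =
      (ρ * p₂ t - p₁ t) * Real.exp (ρ * (t - τ₁)) + ρ * z₂ t * Real.exp (-ρ * (t - τ₁)))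
    (hp₁ : ∀ t : ℝ, HasDerivAt p₁ 0 t)
    (hz₁ : ∀ t : ℝ, HasDerivAt z₁ (-(φ t / (2 * ρ)) * Real.exp (ρ * (t - τ₁))) t)
    (hz₂ : ∀ t : ℝ, HasDerivAt z₂ ((φ t / 2) * Real.exp (ρ * (t - τ₁))) t)
    (hp₂ : ∀ t : ℝ, HasDerivAt p₂ (-(φ t / 2) * Real.exp (-ρ * (t - τ₁))) t) :
    -- (a)
    (∃ a b : ℝ, ∀ t : ℝ, z₂ t = (a + b * (t - τ₁)) * Real.exp (ρ * (t - τ₁))) ∧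
    -- (b)
    (z₁ τ₁ = 0 → z₂ τ₁ = 0 → z₁ τ₂ = 0 → z₂ τ₂ = 0 →
      ∀ t : ℝ, z₁ t = 0 ∧ z₂ t = 0 ∧ φ t = 0) :=
  stmt7_general ρ τ₁ τ₂ hτ z₁ z₂ p₁ p₂ φ hφ hp₁ hz₁ hz₂ hp₂
end

section
/- Let ρ > 0, τ̂₁ < τ̂₂, and ε ∈ ℝ. Suppose w : [τ̂₁, τ̂₂] → ℝ is differentiable and, setting ζ₂(t) = ε + ρ·∫_{τ̂₁}^{t} w(s)·e^{ρ(s−τ̂₁)} ds, satisfies for all t ∈ [τ̂₁, τ̂₂]: w'(t)·e^{−ρ(t−τ̂₁)} − ρ·w(t)·e^{−ρ(t−τ̂₁)} + ρ·ζ₂(t)·e^{−2ρ(t−τ̂₁)} = 0. Then w is an affine function: there exist constants c, d ∈ ℝ such that w(t) = c + d·(t − τ̂₁) for all t ∈ [τ̂₁, τ̂₂]. -/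
/-!
Write `E t = exp (-ρ (t - τ₁))`. Since `ζ₂' = ρ w / E`, the equation says `w' = ρ (w - ζ₂ E)`, and
then `(ζ₂ E)' = ρ w - ρ ζ₂ E = w'`. Hence `w - ζ₂ E` is a first integral, equal to its value
`w τ₁ - ε` at `τ₁`, so `w' = ρ (w τ₁ - ε)` is constant and `w` is affine.
-/

open Real Set

section Primitive

variable {E : Type*} [NormedAddCommGroup E] [NormedSpace ℝ E]
  {g : ℝ → E} {a b : ℝ}

theorem continuousOn_primitive_of_continuousOn (hg : ContinuousOn g (Icc a b)) :
    ContinuousOn (fun t => ∫ s in a..t, g s) (Icc a b) := by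
  rcases le_or_gt a b with hab | hab
  · have hint : MeasureTheory.IntegrableOn g (uIcc a b) := by
      rw [uIcc_of_le hab]; exact hg.integrableOn_Icc
    simpa only [uIcc_of_le hab] using intervalIntegral.continuousOn_primitive_interval hint
  · simp only [Icc_eq_empty_of_lt hab, continuousOn_empty]

theorem hasDerivWithinAt_primitive_Ici_of_continuousOn [CompleteSpace E]
    (hg : ContinuousOn g (Icc a b)) {x : ℝ} (hx : x ∈ Ico a b) :
    HasDerivWithinAt (fun t => ∫ s in a..t, g s) (g x) (Ici x) x := by
  have hint : IntervalIntegrable g MeasureTheory.volume a x :=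
    (hg.mono (uIcc_of_le hx.1 ▸ Icc_subset_Icc_right hx.2.le)).intervalIntegrable
  have hmeas : StronglyMeasurableAtFilter g (nhdsWithin x (Ioi x)) :=
    ⟨Ioc x b, Ioc_mem_nhdsGT hx.2, (hg.mono (Ioc_subset_Icc_self.trans
      (Icc_subset_Icc_left hx.1))).aestronglyMeasurable measurableSet_Ioc⟩
  exact intervalIntegral.integral_hasDerivWithinAt_right hint hmeas
    ((hg x (Ico_subset_Icc_self hx)).mono_of_mem_nhdsWithin (Icc_mem_nhdsGT_of_mem hx))

end Primitive

theorem eq_add_mul_sub_of_hasDerivAt_const_s9 {w : ℝ → ℝ} {a b d : ℝ}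
    (hw : ∀ t ∈ Icc a b, HasDerivAt w d t) : ∀ t ∈ Icc a b, w t = w a + d * (t - a) := by
  refine eq_of_has_deriv_right_eq (f' := fun _ => d)
    (fun t ht => (hw t (Ico_subset_Icc_self ht)).hasDerivWithinAt) (fun t _ => ?_)
    (fun t ht => (hw t ht).continuousAt.continuousWithinAt) (by fun_prop) (by ring)
  simpa using (((hasDerivAt_id t).sub_const a).const_mul d).const_add (w a) |>.hasDerivWithinAt

theorem eq_mul_sub_of_sub_add_mul_exp_eq_zero {a b z ρ u : ℝ}
    (h : a * exp (-ρ * u) - ρ * b * exp (-ρ * u) + ρ * z * exp (-2 * ρ * u) = 0) :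
    a = ρ * (b - z * exp (-ρ * u)) := by
  have hsq : exp (-2 * ρ * u) = exp (-ρ * u) * exp (-ρ * u) := by
    rw [← exp_add]; ring_nf
  have hprod : exp (-ρ * u) * (a - ρ * (b - z * exp (-ρ * u))) = 0 := by
    rw [hsq] at h; linear_combination h
  simpa [sub_eq_zero, (exp_pos _).ne'] using hprod

theorem hasDerivWithinAt_mul_exp_neg_mul_sub {ζ w : ℝ → ℝ} {s : Set ℝ} {ρ τ x : ℝ}
    (hζ : HasDerivWithinAt ζ (ρ * (w x * exp (ρ * (x - τ)))) s x) :
    HasDerivWithinAt (fun t => ζ t * exp (-ρ * (t - τ)))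
      (ρ * (w x - ζ x * exp (-ρ * (x - τ)))) s x := by
  have hE : HasDerivAt (fun t => exp (-ρ * (t - τ))) (exp (-ρ * (x - τ)) * (-ρ)) x := by
    simpa using (((hasDerivAt_id x).sub_const τ).const_mul (-ρ)).exp
  have hinv : exp (ρ * (x - τ)) * exp (-ρ * (x - τ)) = 1 := by
    rw [← exp_add]; ring_nf; exact exp_zero
  exact (hζ.mul hE.hasDerivWithinAt).congr_deriv (by linear_combination (ρ * w x) * hinv)

theorem stmt9_general (ρ τ₁ τ₂ ε : ℝ)
    (w w' : ℝ → ℝ)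
    (hw : ∀ t ∈ Set.Icc τ₁ τ₂, HasDerivAt w (w' t) t)
    (ζ₂ : ℝ → ℝ)
    (hζ₂ : ∀ t : ℝ, ζ₂ t = ε + ρ * ∫ s in τ₁..t, w s * Real.exp (ρ * (s - τ₁)))
    (heq : ∀ t ∈ Set.Icc τ₁ τ₂,
      w' t * Real.exp (-ρ * (t - τ₁)) - ρ * w t * Real.exp (-ρ * (t - τ₁))
        + ρ * ζ₂ t * Real.exp (-2 * ρ * (t - τ₁)) = 0) :
    ∃ c d : ℝ, ∀ t ∈ Set.Icc τ₁ τ₂, w t = c + d * (t - τ₁) := by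
  have hwc : ContinuousOn w (Icc τ₁ τ₂) := fun t ht => (hw t ht).continuousAt.continuousWithinAt
  have hfc : ContinuousOn (fun s => w s * exp (ρ * (s - τ₁))) (Icc τ₁ τ₂) :=
    hwc.mul (by fun_prop)
  have hζc : ContinuousOn ζ₂ (Icc τ₁ τ₂) := by
    rw [show ζ₂ = _ from funext hζ₂]
    exact continuousOn_const.add
      (continuousOn_const.mul (continuousOn_primitive_of_continuousOn hfc))
  have hζd : ∀ t ∈ Ico τ₁ τ₂,
      HasDerivWithinAt ζ₂ (ρ * (w t * exp (ρ * (t - τ₁)))) (Ici t) t := by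
    intro t ht
    rw [show ζ₂ = _ from funext hζ₂]
    exact ((hasDerivWithinAt_primitive_Ici_of_continuousOn hfc ht).const_mul ρ).const_add ε
  set G : ℝ → ℝ := fun t => w t - ζ₂ t * exp (-ρ * (t - τ₁))
  have hw' : ∀ t ∈ Icc τ₁ τ₂, w' t = ρ * G t := fun t ht =>
    eq_mul_sub_of_sub_add_mul_exp_eq_zero (heq t ht)
  have hG : ∀ t ∈ Icc τ₁ τ₂, G t = G τ₁ := by
    refine constant_of_has_deriv_right_zero (hwc.sub (hζc.mul (by fun_prop))) fun t ht => ?_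
    have ht' : t ∈ Icc τ₁ τ₂ := Ico_subset_Icc_self ht
    exact ((hw t ht').hasDerivWithinAt.sub
      (hasDerivWithinAt_mul_exp_neg_mul_sub (hζd t ht))).congr_deriv (by rw [hw' t ht', sub_self])
  refine ⟨w τ₁, ρ * G τ₁, eq_add_mul_sub_of_hasDerivAt_const_s9 fun t ht => ?_⟩
  simpa only [hw' t ht, hG t ht] using hw t ht

theorem stmt9 (ρ τ₁ τ₂ ε : ℝ) (hρ : 0 < ρ) (hτ : τ₁ < τ₂)
    (w w' : ℝ → ℝ)
    (hw : ∀ t ∈ Set.Icc τ₁ τ₂, HasDerivAt w (w' t) t)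
    (ζ₂ : ℝ → ℝ)
    (hζ₂ : ∀ t : ℝ, ζ₂ t = ε + ρ * ∫ s in τ₁..t, w s * Real.exp (ρ * (s - τ₁)))
    (heq : ∀ t ∈ Set.Icc τ₁ τ₂,
      w' t * Real.exp (-ρ * (t - τ₁)) - ρ * w t * Real.exp (-ρ * (t - τ₁))
        + ρ * ζ₂ t * Real.exp (-2 * ρ * (t - τ₁)) = 0) :
    ∃ c d : ℝ, ∀ t ∈ Set.Icc τ₁ τ₂, w t = c + d * (t - τ₁) :=
  stmt9_general ρ τ₁ τ₂ ε w w' hw ζ₂ hζ₂ heq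
end

section
/- Let ρ > 0, τ̂₁ < τ̂₂, set τ̂₃ = τ̂₂ + (1/ρ)·log(1+√2), and let û_S ∈ (0,1). For (ε, w) ∈ ℝ × L²([τ̂₁, τ̂₂]) define ζ₂(t) = ε + ρ·∫_{τ̂₁}^{t} w(s)·e^{ρ(s−τ̂₁)} ds and Q(ε, w) = ε²·(1 + √2·û_S) + ∫_{τ̂₁}^{τ̂₂} ( ρ·w(t)² − ρ·w(t)·ζ₂(t)·e^{−ρ(t−τ̂₁)} ) dt. Then there exists a constant c > 0 such that Q(ε, w) ≥ c·( ε² + ‖w‖²_{L²([τ̂₁,τ̂₂])} ) for every pair (ε, w) satisfying the constraint ∫_{τ̂₁}^{τ̂₂} w(s)·e^{ρ(s−τ̂₁)} ds = ε·(e^{ρ(τ̂₃−τ̂₁)} − 1)/ρ. -/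
/-!
Let `v(t) = ζ₂(t) e^{-ρ(t-τ₁)}`. It is absolutely continuous with `v(τ₁) = ε` and
`v' = ρ (w - v)` a.e., and the constraint says exactly `v(τ₂) = (1 + √2) ε`. Writing the
integrand as `ρ (w - v)² + v v'` gives `Q = ε² (1 + √2 u_S) + ρ ‖w - v‖² + (1 + √2) ε²`, which
dominates `ε² + ρ ‖w - v‖²`. Conversely `v = ε + ρ ∫ (w - v)`, so Cauchy–Schwarz bounds `‖v‖²`,
hence `‖w‖² ≤ 2 ‖w - v‖² + 2 ‖v‖²`, by a multiple of `ε² + ‖w - v‖²`.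
-/

open Real MeasureTheory Set

theorem sq_intervalIntegral_le {f : ℝ → ℝ} {a b : ℝ} (hab : a ≤ b)
    (hf : IntervalIntegrable f volume a b)
    (hf2 : IntervalIntegrable (fun x => f x ^ 2) volume a b) :
    (∫ x in a..b, f x) ^ 2 ≤ (b - a) * ∫ x in a..b, f x ^ 2 := by
  have hquad : ∀ c : ℝ,
      0 ≤ (b - a) * (c * c) + (-2 * ∫ x in a..b, f x) * c + ∫ x in a..b, f x ^ 2 := by
    intro c
    calc 0 ≤ ∫ x in a..b, (f x - c) ^ 2 :=
          intervalIntegral.integral_nonneg hab fun _ _ => sq_nonneg _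
      _ = ∫ x in a..b, (f x ^ 2 + (-2 * c) * f x + c * c) := by
          congr 1; funext x; ring
      _ = _ := by
          rw [intervalIntegral.integral_add (hf2.add (hf.const_mul _)) intervalIntegrable_const,
            intervalIntegral.integral_add hf2 (hf.const_mul _),
            intervalIntegral.integral_const_mul, intervalIntegral.integral_const, smul_eq_mul]
          ring
  have hdisc := discrim_le_zero hquad
  rw [discrim] at hdisc
  nlinarith

theorem AbsolutelyContinuousOnInterval.integral_mul_deriv_self {f : ℝ → ℝ} {a b : ℝ}
    (hf : AbsolutelyContinuousOnInterval f a b) :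
    ∫ x in a..b, f x * deriv f x = (f b ^ 2 - f a ^ 2) / 2 := by
  have := hf.integral_deriv_mul_eq_sub hf
  simp_rw [mul_comm (deriv f _), ← two_mul] at this
  rw [intervalIntegral.integral_const_mul] at this
  linarith

theorem IntervalIntegrable.sq_sub_of_continuousOn {f g : ℝ → ℝ} {a b : ℝ}
    (hf : IntervalIntegrable f volume a b)
    (hf2 : IntervalIntegrable (fun x => f x ^ 2) volume a b) (hg : ContinuousOn g (uIcc a b)) :
    IntervalIntegrable (fun x => (f x - g x) ^ 2) volume a b := by
  have h := (hf2.sub ((hf.mul_continuousOn hg).const_mul 2)).add (hg.pow 2).intervalIntegrable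
  convert h using 2 with x
  simp only [Pi.pow_apply]; ring

theorem intervalIntegral_sq_le_two_mul_add {f g : ℝ → ℝ} {a b : ℝ} (hab : a ≤ b)
    (hf : IntervalIntegrable (fun x => f x ^ 2) volume a b)
    (hfg : IntervalIntegrable (fun x => (f x - g x) ^ 2) volume a b)
    (hg : IntervalIntegrable (fun x => g x ^ 2) volume a b) :
    ∫ x in a..b, f x ^ 2 ≤ 2 * (∫ x in a..b, (f x - g x) ^ 2) + 2 * ∫ x in a..b, g x ^ 2 := by
  rw [← intervalIntegral.integral_const_mul, ← intervalIntegral.integral_const_mul,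
    ← intervalIntegral.integral_add (hfg.const_mul 2) (hg.const_mul 2)]
  refine intervalIntegral.integral_mono_on hab hf ((hfg.const_mul 2).add (hg.const_mul 2))
    fun x _ => ?_
  nlinarith [sq_nonneg (f x - 2 * g x)]

theorem MeasureTheory.MemLp.intervalIntegrable_of_Icc {f : ℝ → ℝ} {a b : ℝ} (hab : a ≤ b)
    (hf : MemLp f 2 (volume.restrict (Icc a b))) : IntervalIntegrable f volume a b := by
  refine IntegrableOn.intervalIntegrable ?_
  rw [uIcc_of_le hab]
  exact hf.integrable one_le_two

theorem MeasureTheory.MemLp.intervalIntegrable_sq_of_Icc {f : ℝ → ℝ} {a b : ℝ} (hab : a ≤ b)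
    (hf : MemLp f 2 (volume.restrict (Icc a b))) :
    IntervalIntegrable (fun x => f x ^ 2) volume a b := by
  refine IntegrableOn.intervalIntegrable ?_
  rw [uIcc_of_le hab]
  exact hf.integrable_sq

theorem IntervalIntegrable.mul_exp {w : ℝ → ℝ} {a b : ℝ} (hw : IntervalIntegrable w volume a b)
    (ρ c : ℝ) : IntervalIntegrable (fun s => w s * exp (ρ * (s - c))) volume a b :=
  hw.mul_continuousOn (by fun_prop)

noncomputable def dampedState (ρ a ε : ℝ) (w : ℝ → ℝ) (t : ℝ) : ℝ :=
  (ε + ρ * ∫ s in a..t, w s * exp (ρ * (s - a))) * exp (-ρ * (t - a))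

section dampedState

variable {ρ a b ε : ℝ} {w : ℝ → ℝ}

@[simp]
theorem dampedState_self : dampedState ρ a ε w a = ε := by
  simp [dampedState]

theorem absolutelyContinuousOnInterval_dampedState (hw : IntervalIntegrable w volume a b) :
    AbsolutelyContinuousOnInterval (dampedState ρ a ε w) a b := by
  have hprim := (hw.mul_exp ρ a).absolutelyContinuousOnInterval_intervalIntegral
    (c := a) left_mem_uIcc
  have hexp : AbsolutelyContinuousOnInterval (fun t => exp (-ρ * (t - a))) a b :=
    ContDiffOn.absolutelyContinuousOnInterval (by fun_prop)
  have hconst : AbsolutelyContinuousOnInterval (fun _ : ℝ => ε) a b :=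
    ContDiffOn.absolutelyContinuousOnInterval contDiffOn_const
  exact (hconst.add (hprim.const_mul ρ)).fun_mul hexp

theorem continuousOn_dampedState (hw : IntervalIntegrable w volume a b) :
    ContinuousOn (dampedState ρ a ε w) (uIcc a b) :=
  (absolutelyContinuousOnInterval_dampedState hw).continuousOn

theorem ae_deriv_dampedState (hw : IntervalIntegrable w volume a b) :
    ∀ᵐ t, t ∈ uIcc a b →
      deriv (dampedState ρ a ε w) t = ρ * (w t - dampedState ρ a ε w t) := by
  filter_upwards [(hw.mul_exp ρ a).ae_hasDerivAt_integral] with t ht hmem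
  have hprim := ((ht hmem a left_mem_uIcc).const_mul ρ).const_add ε
  have hexp : HasDerivAt (fun t => exp (-ρ * (t - a))) (exp (-ρ * (t - a)) * -ρ) t := by
    simpa using (((hasDerivAt_id t).sub_const a).const_mul (-ρ)).exp
  have hinv : exp (ρ * (t - a)) * exp (-ρ * (t - a)) = 1 := by
    rw [← exp_add]; simp
  refine ((hprim.mul hexp).congr_deriv ?_).deriv
  simp only [dampedState]
  linear_combination ρ * w t * hinv

theorem dampedState_eq_add_integral (hw : IntervalIntegrable w volume a b) {t : ℝ}
    (ht : t ∈ uIcc a b) :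
    dampedState ρ a ε w t = ε + ρ * ∫ s in a..t, (w s - dampedState ρ a ε w s) := by
  have hsub : uIcc a t ⊆ uIcc a b := uIcc_subset_uIcc left_mem_uIcc ht
  have hac := (absolutelyContinuousOnInterval_dampedState (ρ := ρ) (ε := ε) hw).mono hsub
  have hftc := hac.integral_deriv_eq_sub
  rw [intervalIntegral.integral_congr_ae (g := fun s => ρ * (w s - dampedState ρ a ε w s)) ?_,
    intervalIntegral.integral_const_mul, dampedState_self] at hftc
  · linarith
  filter_upwards [ae_deriv_dampedState hw] with s hs hsI
  exact hs (hsub (uIoc_subset_uIcc hsI))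

theorem integral_dampedState_mul_sub (hw : IntervalIntegrable w volume a b) :
    ρ * ∫ t in a..b, dampedState ρ a ε w t * (w t - dampedState ρ a ε w t) =
      (dampedState ρ a ε w b ^ 2 - ε ^ 2) / 2 := by
  have hibp :=
    (absolutelyContinuousOnInterval_dampedState (ρ := ρ) (ε := ε) hw).integral_mul_deriv_self
  rw [dampedState_self] at hibp
  rw [← hibp, ← intervalIntegral.integral_const_mul]
  refine intervalIntegral.integral_congr_ae ?_
  filter_upwards [ae_deriv_dampedState hw] with t ht htI
  rw [ht (uIoc_subset_uIcc htI)]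
  ring

theorem dampedState_of_integral_eq (hρ : ρ ≠ 0) {c : ℝ}
    (h : ∫ s in a..b, w s * exp (ρ * (s - a)) = ε * (exp (ρ * (c - a)) - 1) / ρ) :
    dampedState ρ a ε w b = ε * exp (ρ * (c - b)) := by
  rw [dampedState, h, mul_div_cancel₀ _ hρ, mul_sub, mul_one, add_sub_cancel, mul_assoc,
    ← exp_add]
  ring_nf

theorem integral_secondVariation_eq (hw : IntervalIntegrable w volume a b)
    (hw2 : IntervalIntegrable (fun t => w t ^ 2) volume a b) :
    ∫ t in a..b, (ρ * w t ^ 2 -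
        ρ * w t * (ε + ρ * ∫ s in a..t, w s * exp (ρ * (s - a))) * exp (-ρ * (t - a))) =
      ρ * (∫ t in a..b, (w t - dampedState ρ a ε w t) ^ 2) +
        (dampedState ρ a ε w b ^ 2 - ε ^ 2) / 2 := by
  have hv := continuousOn_dampedState (ρ := ρ) (ε := ε) hw
  have hsplit : (fun t => ρ * w t ^ 2 -
        ρ * w t * (ε + ρ * ∫ s in a..t, w s * exp (ρ * (s - a))) * exp (-ρ * (t - a))) =
      fun t => ρ * (w t - dampedState ρ a ε w t) ^ 2 +
        ρ * (dampedState ρ a ε w t * (w t - dampedState ρ a ε w t)) := by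
    funext t; simp only [dampedState]; ring
  rw [hsplit, intervalIntegral.integral_add ((hw.sq_sub_of_continuousOn hw2 hv).const_mul ρ)
    (((hw.sub hv.intervalIntegrable).continuousOn_mul hv).const_mul ρ),
    intervalIntegral.integral_const_mul, intervalIntegral.integral_const_mul,
    integral_dampedState_mul_sub hw]

theorem sq_dampedState_le (hw : IntervalIntegrable w volume a b)
    (hw2 : IntervalIntegrable (fun t => w t ^ 2) volume a b) {t : ℝ} (ht : t ∈ Icc a b) :
    dampedState ρ a ε w t ^ 2 ≤
      2 * ε ^ 2 + 2 * ρ ^ 2 * ((b - a) * ∫ s in a..b, (w s - dampedState ρ a ε w s) ^ 2) := by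
  set v := dampedState ρ a ε w
  have hv : ContinuousOn v (uIcc a b) := continuousOn_dampedState hw
  have htI : t ∈ uIcc a b := Icc_subset_uIcc ht
  have hsub : uIcc a t ⊆ uIcc a b := uIcc_subset_uIcc left_mem_uIcc htI
  have hφ2 := hw.sq_sub_of_continuousOn hw2 hv
  have hcs : (∫ s in a..t, (w s - v s)) ^ 2 ≤ (t - a) * ∫ s in a..t, (w s - v s) ^ 2 :=
    sq_intervalIntegral_le ht.1 ((hw.sub hv.intervalIntegrable).mono_set hsub)
      (hφ2.mono_set hsub)
  have hmono : ∫ s in a..t, (w s - v s) ^ 2 ≤ ∫ s in a..b, (w s - v s) ^ 2 :=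
    intervalIntegral.integral_mono_interval le_rfl ht.1 ht.2
      (Filter.Eventually.of_forall fun _ => sq_nonneg _) hφ2
  have hext :
      (t - a) * ∫ s in a..t, (w s - v s) ^ 2 ≤ (b - a) * ∫ s in a..b, (w s - v s) ^ 2 :=
    mul_le_mul (by linarith [ht.2]) hmono
      (intervalIntegral.integral_nonneg ht.1 fun _ _ => sq_nonneg _) (by linarith [ht.1, ht.2])
  rw [show v t = _ from dampedState_eq_add_integral hw htI]
  nlinarith [sq_nonneg (ε - ρ * ∫ s in a..t, (w s - v s))]

theorem integral_sq_dampedState_le (hab : a ≤ b) (hw : IntervalIntegrable w volume a b)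
    (hw2 : IntervalIntegrable (fun t => w t ^ 2) volume a b) :
    ∫ t in a..b, dampedState ρ a ε w t ^ 2 ≤ (b - a) *
      (2 * ε ^ 2 + 2 * ρ ^ 2 * ((b - a) * ∫ s in a..b, (w s - dampedState ρ a ε w s) ^ 2)) := by
  have hv2 := ((continuousOn_dampedState (ρ := ρ) (ε := ε) hw).pow 2).intervalIntegrable
    (μ := volume)
  rw [← smul_eq_mul, ← intervalIntegral.integral_const]
  exact intervalIntegral.integral_mono_on hab hv2 (intervalIntegrable_const (μ := volume))
    fun t ht => sq_dampedState_le hw hw2 ht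

theorem sq_add_integral_sq_le (hab : a ≤ b) (hw : IntervalIntegrable w volume a b)
    (hw2 : IntervalIntegrable (fun t => w t ^ 2) volume a b) :
    ε ^ 2 + ∫ t in a..b, w t ^ 2 ≤ (3 + 4 * (b - a) + 4 * ρ ^ 2 * (b - a) ^ 2) *
      (ε ^ 2 + ∫ t in a..b, (w t - dampedState ρ a ε w t) ^ 2) := by
  have hv := continuousOn_dampedState (ρ := ρ) (ε := ε) hw
  have hW := intervalIntegral_sq_le_two_mul_add hab hw2 (hw.sq_sub_of_continuousOn hw2 hv)
    ((hv.pow 2).intervalIntegrable (μ := volume))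
  have hV := integral_sq_dampedState_le (ρ := ρ) (ε := ε) hab hw hw2
  have hS : 0 ≤ ∫ t in a..b, (w t - dampedState ρ a ε w t) ^ 2 :=
    intervalIntegral.integral_nonneg hab fun _ _ => sq_nonneg _
  nlinarith [sq_nonneg ε, mul_nonneg (sq_nonneg ρ) (sq_nonneg (b - a)), sub_nonneg.2 hab]

end dampedState

theorem stmt10 (ρ τ₁ τ₂ : ℝ) (hρ : 0 < ρ) (hτ : τ₁ < τ₂)
    (τ₃ : ℝ) (hτ₃ : τ₃ = τ₂ + (1 / ρ) * Real.log (1 + Real.sqrt 2))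
    (uS : ℝ) (huS : uS ∈ Set.Ioo (0 : ℝ) 1) :
    ∃ c > 0, ∀ (ε : ℝ) (w : ℝ → ℝ),
      MemLp w 2 (volume.restrict (Set.Icc τ₁ τ₂)) →
      (∫ s in τ₁..τ₂, w s * Real.exp (ρ * (s - τ₁)))
          = ε * (Real.exp (ρ * (τ₃ - τ₁)) - 1) / ρ →
      c * (ε ^ 2 + ∫ t in τ₁..τ₂, (w t) ^ 2) ≤
        ε ^ 2 * (1 + Real.sqrt 2 * uS) +
          ∫ t in τ₁..τ₂,
            (ρ * w t ^ 2 -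
              ρ * w t *
                (ε + ρ * ∫ s in τ₁..t, w s * Real.exp (ρ * (s - τ₁))) *
                Real.exp (-ρ * (t - τ₁))) := by
  set L := τ₂ - τ₁
  have hL : 0 < L := sub_pos.2 hτ
  set K := 3 + 4 * L + 4 * ρ ^ 2 * L ^ 2
  have hK : 0 < K := by positivity
  refine ⟨min 1 ρ / K, by positivity, fun ε w hw hcon => ?_⟩
  have hwi := hw.intervalIntegrable_of_Icc hτ.le
  have hw2i := hw.intervalIntegrable_sq_of_Icc hτ.le
  have hexp : exp (ρ * (τ₃ - τ₂)) = 1 + √2 := by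
    rw [hτ₃, add_sub_cancel_left, ← mul_assoc, mul_one_div_cancel hρ.ne', one_mul,
      exp_log (by positivity)]
  have hQ := integral_secondVariation_eq (ρ := ρ) (ε := ε) hwi hw2i
  rw [dampedState_of_integral_eq hρ.ne' hcon, hexp] at hQ
  have hW := sq_add_integral_sq_le (ρ := ρ) (ε := ε) hτ.le hwi hw2i
  set S := ∫ t in τ₁..τ₂, (w t - dampedState ρ τ₁ ε w t) ^ 2
  have hS : 0 ≤ S := intervalIntegral.integral_nonneg hτ.le fun _ _ => sq_nonneg _
  calc min 1 ρ / K * (ε ^ 2 + ∫ t in τ₁..τ₂, w t ^ 2)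
      ≤ min 1 ρ / K * (K * (ε ^ 2 + S)) := by gcongr
    _ = min 1 ρ * (ε ^ 2 + S) := by field_simp
    _ ≤ ε ^ 2 + ρ * S := by nlinarith [min_le_left 1 ρ, min_le_right 1 ρ, sq_nonneg ε]
    _ ≤ _ := by
      rw [hQ]
      nlinarith [huS.1, sqrt_nonneg 2, sq_nonneg ε, mul_nonneg (sqrt_nonneg 2) huS.1.le,
        sq_sqrt (zero_le_two (α := ℝ))]
end
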